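/- Let 0 < ν < 1. Then ∫_1^∞ ((v+1)^{2ν} − v^{2ν}) / v^{ν+1} dv = ∫_{1/2}^1 (1 − x^{2ν}) / (x^{ν+1} (1−x)^{ν+1}) dx, both integrals being finite. -/

import Mathlib

/-!
The substitution v = x / (1 - x) maps (1/2, 1) bijectively onto (1, ∞) with dv = dx / (1 - x)²,
and since v + 1 = 1 / (1 - x) it turns the first integrand into the second. Finiteness on [1, ∞)
comes from the mean value theorem: (v + 1)^p - v^p = O(v^(p-1)) for 0 ≤ p ≤ 2, so the integrand
is O(v^(ν-2)).
-/

open MeasureTheory Set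

lemma rpow_le_two_mul_rpow_of_le_two_mul {v c q : ℝ} (hv : 0 < v) (hvc : v ≤ c)
    (hc : c ≤ 2 * v) (hq : q ≤ 1) : c ^ q ≤ 2 * v ^ q := by
  have hvq : 0 ≤ v ^ q := Real.rpow_nonneg hv.le q
  rcases le_or_gt 0 q with hq0 | hq0
  · calc c ^ q ≤ (2 * v) ^ q := Real.rpow_le_rpow (hv.le.trans hvc) hc hq0
      _ = 2 ^ q * v ^ q := Real.mul_rpow zero_le_two hv.le
      _ ≤ 2 ^ (1 : ℝ) * v ^ q := by gcongr; norm_num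
      _ = 2 * v ^ q := by rw [Real.rpow_one]
  · linarith [Real.rpow_le_rpow_of_nonpos hv hvc hq0.le]

lemma add_one_rpow_sub_rpow_le {p v : ℝ} (hp0 : 0 ≤ p) (hp2 : p ≤ 2) (hv : 1 ≤ v) :
    (v + 1) ^ p - v ^ p ≤ 2 * p * v ^ (p - 1) := by
  have hv0 : 0 < v := one_pos.trans_le hv
  obtain ⟨c, ⟨hvc, hcv⟩, hslope⟩ := exists_hasDerivAt_eq_slope (fun t => t ^ p)
    (fun t => p * t ^ (p - 1)) (lt_add_one v)
    (fun t ht => (Real.continuousAt_rpow_const t p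
      (Or.inl (hv0.trans_le ht.1).ne')).continuousWithinAt)
    (fun t ht => Real.hasDerivAt_rpow_const (Or.inl (hv0.trans ht.1).ne'))
  have hc : c ^ (p - 1) ≤ 2 * v ^ (p - 1) :=
    rpow_le_two_mul_rpow_of_le_two_mul hv0 hvc.le (by linarith) (by linarith)
  have hdiff : (v + 1) ^ p - v ^ p = p * c ^ (p - 1) := by
    rw [hslope]; ring
  rw [hdiff]
  nlinarith

lemma integrableOn_Ici_add_one_rpow_sub_rpow_div_rpow {p q : ℝ} (hp0 : 0 ≤ p) (hp2 : p ≤ 2)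
    (hpq : p < q) : IntegrableOn (fun v : ℝ => ((v + 1) ^ p - v ^ p) / v ^ q) (Ici 1) := by
  have hcont : ContinuousOn (fun v : ℝ => ((v + 1) ^ p - v ^ p) / v ^ q) (Ici 1) := by
    intro v hv
    have hv0 : v ≠ 0 := (one_pos.trans_le hv).ne'
    refine ContinuousWithinAt.div ?_ ?_ (Real.rpow_pos_of_pos (one_pos.trans_le hv) q).ne'
    · fun_prop (disch := first | exact Or.inl hv0 | exact Or.inr hp0)
    · fun_prop (disch := exact Or.inl hv0)
  have hmajorant : IntegrableOn (fun v : ℝ => 2 * p * v ^ (p - 1 - q)) (Ici 1) :=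
    (integrableOn_Ici_iff_integrableOn_Ioi).mpr
      ((integrableOn_Ioi_rpow_of_lt (by linarith) one_pos).const_mul _)
  refine hmajorant.mono' (hcont.aestronglyMeasurable measurableSet_Ici) ?_
  refine (ae_restrict_iff' measurableSet_Ici).mpr (Filter.Eventually.of_forall fun v hv => ?_)
  have hv0 : 0 < v := one_pos.trans_le hv
  have hnum : 0 ≤ (v + 1) ^ p - v ^ p :=
    sub_nonneg.mpr (Real.rpow_le_rpow hv0.le (by linarith) hp0)
  rw [Real.norm_of_nonneg (by positivity), Real.rpow_sub hv0 (p - 1), ← mul_div_assoc]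
  gcongr
  exact add_one_rpow_sub_rpow_le hp0 hp2 hv

lemma hasDerivAt_div_one_sub {x : ℝ} (hx : x ≠ 1) :
    HasDerivAt (fun y : ℝ => y / (1 - y)) (1 / (1 - x) ^ 2) x := by
  have hx' : 1 - x ≠ 0 := sub_ne_zero.mpr hx.symm
  exact ((hasDerivAt_id' x).div ((hasDerivAt_id' x).const_sub 1) hx').congr_deriv
    (by ring)

lemma injOn_div_one_sub : InjOn (fun y : ℝ => y / (1 - y)) (Iio 1) := by
  intro a ha b hb hab
  have ha' : 1 - a ≠ 0 := by linarith [mem_Iio.mp ha]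
  have hb' : 1 - b ≠ 0 := by linarith [mem_Iio.mp hb]
  field_simp at hab
  linarith

lemma image_div_one_sub_Ioo : (fun y : ℝ => y / (1 - y)) '' Ioo (1 / 2) 1 = Ioi 1 := by
  ext v
  constructor
  · rintro ⟨x, ⟨hx, hx'⟩, rfl⟩
    exact (one_lt_div (sub_pos.mpr hx')).mpr (by linarith)
  · intro hv
    have hv : 1 < v := hv
    refine ⟨v / (1 + v), ⟨?_, ?_⟩, ?_⟩
    · rw [lt_div_iff₀ (by linarith)]; linarith
    · rw [div_lt_one (by linarith)]; linarith
    · have h : 1 + v ≠ 0 := by linarith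
      field_simp
      ring

lemma integrableOn_Ioi_one_iff_comp_div_one_sub (g : ℝ → ℝ) :
    IntegrableOn g (Ioi 1) ↔
      IntegrableOn (fun x => 1 / (1 - x) ^ 2 * g (x / (1 - x))) (Ioo (1 / 2) 1) := by
  rw [← image_div_one_sub_Ioo, integrableOn_image_iff_integrableOn_abs_deriv_smul
    measurableSet_Ioo (fun x hx => (hasDerivAt_div_one_sub hx.2.ne).hasDerivWithinAt)
    (injOn_div_one_sub.mono fun x hx => hx.2)]
  simp only [abs_div, abs_one, abs_sq, smul_eq_mul]

lemma integral_Ioi_one_eq_integral_comp_div_one_sub (g : ℝ → ℝ) :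
    ∫ v in Ioi 1, g v = ∫ x in Ioo (1 / 2) 1, 1 / (1 - x) ^ 2 * g (x / (1 - x)) := by
  rw [← image_div_one_sub_Ioo, integral_image_eq_integral_abs_deriv_smul
    measurableSet_Ioo (fun x hx => (hasDerivAt_div_one_sub hx.2.ne).hasDerivWithinAt)
    (injOn_div_one_sub.mono fun x hx => hx.2)]
  simp only [abs_div, abs_one, abs_sq, smul_eq_mul]

lemma one_div_one_sub_sq_mul_add_one_rpow_sub_rpow_div_rpow {x : ℝ} (hx : x ∈ Ioo 0 1)
    (p q : ℝ) :
    1 / (1 - x) ^ 2 * (((x / (1 - x) + 1) ^ p - (x / (1 - x)) ^ p) / (x / (1 - x)) ^ q) =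
      (1 - x ^ p) / (x ^ q * (1 - x) ^ (p + 2 - q)) := by
  obtain ⟨hx0, hx1⟩ := hx
  have hy : 0 < 1 - x := by linarith
  have hadd : x / (1 - x) + 1 = 1 / (1 - x) := by field_simp; ring
  have hexp : (1 - x) ^ (p + 2 - q) = (1 - x) ^ p * (1 - x) ^ 2 / (1 - x) ^ q := by
    rw [Real.rpow_sub hy, Real.rpow_add hy, Real.rpow_two]
  rw [hadd, hexp, Real.div_rpow hx0.le hy.le, Real.div_rpow hx0.le hy.le,
    Real.div_rpow zero_le_one hy.le, Real.one_rpow]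
  have := Real.rpow_pos_of_pos hx0 q
  have := Real.rpow_pos_of_pos hy q
  have := Real.rpow_pos_of_pos hy p
  field_simp

theorem stmt_6 (ν : ℝ) (h0 : 0 < ν) (h1 : ν < 1) :
    IntegrableOn (fun v : ℝ => ((v + 1) ^ (2 * ν) - v ^ (2 * ν)) / v ^ (ν + 1))
        (Set.Ici 1) ∧
    IntegrableOn (fun x : ℝ => (1 - x ^ (2 * ν)) / (x ^ (ν + 1) * (1 - x) ^ (ν + 1)))
        (Set.Ioo (1 / 2) 1) ∧
    (∫ v in Set.Ici (1 : ℝ), ((v + 1) ^ (2 * ν) - v ^ (2 * ν)) / v ^ (ν + 1)) =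
      ∫ x in Set.Ioo (1 / 2 : ℝ) 1, (1 - x ^ (2 * ν)) / (x ^ (ν + 1) * (1 - x) ^ (ν + 1)) := by
  have hIci := integrableOn_Ici_add_one_rpow_sub_rpow_div_rpow (q := ν + 1)
    (by linarith : 0 ≤ 2 * ν) (by linarith) (by linarith)
  have hsubst : EqOn
      (fun x : ℝ => 1 / (1 - x) ^ 2 *
        (((x / (1 - x) + 1) ^ (2 * ν) - (x / (1 - x)) ^ (2 * ν)) / (x / (1 - x)) ^ (ν + 1)))
      (fun x : ℝ => (1 - x ^ (2 * ν)) / (x ^ (ν + 1) * (1 - x) ^ (ν + 1)))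
      (Ioo (1 / 2) 1) := by
    intro x hx
    dsimp only
    rw [one_div_one_sub_sq_mul_add_one_rpow_sub_rpow_div_rpow ⟨by linarith [hx.1], hx.2⟩,
      show 2 * ν + 2 - (ν + 1) = ν + 1 by ring]
  refine ⟨hIci, ?_, ?_⟩
  · have hIoi := hIci.mono_set Ioi_subset_Ici_self
    exact ((integrableOn_Ioi_one_iff_comp_div_one_sub _).mp hIoi).congr_fun hsubst
      measurableSet_Ioo
  · rw [integral_Ici_eq_integral_Ioi, integral_Ioi_one_eq_integral_comp_div_one_sub]
    exact setIntegral_congr_fun measurableSet_Ioo hsubst
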